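/- arXiv:2010.07619 — 2 statements merged into one kernel-verified Lean document; each statement's English description precedes it below -/
import Mathlib

section
/- Fix a positive integer t and real numbers a_1 < … < a_t and b_1 < … < b_t with a_i ≤ b_i for every i, such that all the differences a_i − a_j, b_i − b_j, a_i − b_j are integers; assume a_1 ≥ 1/2. Let α be a real number and k ∈ {1,…,t} an index with a_k ≤ α ≤ b_k and α − a_k ∈ ℤ. Then the set {i ∈ {1,…,t} : α − k + i ≤ b_i} is nonempty (it contains k); let k_m denote its least element. Then for every index i with k_m ≤ i ≤ k one has a_i ≤ α − k + i ≤ b_i and (α − k + i) − a_i ∈ ℤ (so α − k + i lies in the segment [a_i, b_i] = {a_i, a_i+1, …, b_i}); in particular α − k + i ≥ 1/2 > 0 for all such i. -/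
/-!
Two reals `x < y` in a common `ℤ`-coset satisfy `x + 1 ≤ y`, so an increasing sequence whose terms
lie in one coset grows by at least one per step, i.e. `i ↦ c i - i` is monotone. Applied to `a`
between `i` and `k` this gives `a i ≤ α - k + i`; applied to `b` between `k_m` and `i`, together
with `α - k + k_m ≤ b k_m`, it gives `α - k + i ≤ b i`; and `a i - i ≥ a 1 - 1` gives the bound `1/2`.
-/

/-- Membership in the segment `[x, y] = {x, x+1, …, y}` of reals. -/
def inSeg (x y z : ℝ) : Prop := x ≤ z ∧ z ≤ y ∧ ∃ n : ℤ, z - x = (n : ℝ)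

lemma add_one_le_of_lt_of_sub_eq_intCast {x y : ℝ} (hxy : x < y) (h : ∃ n : ℤ, y - x = n) :
    x + 1 ≤ y := by
  obtain ⟨n, hn⟩ := h
  have hn_pos : 0 < n := by exact_mod_cast hn ▸ sub_pos.mpr hxy
  have : (1 : ℝ) ≤ n := by exact_mod_cast hn_pos
  linarith

lemma sub_natCast_le_sub_natCast {t : ℕ} {c : ℕ → ℝ}
    (hmono : ∀ i j, 1 ≤ i → i < j → j ≤ t → c i < c j)
    (hint : ∀ i j, 1 ≤ i → i ≤ t → 1 ≤ j → j ≤ t → ∃ n : ℤ, c i - c j = n)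
    {i j : ℕ} (hi : 1 ≤ i) (hij : i ≤ j) (hj : j ≤ t) :
    c i - i ≤ c j - j := by
  induction j, hij using Nat.le_induction with
  | base => rfl
  | succ j hij ih =>
    have hstep : c j + 1 ≤ c (j + 1) :=
      add_one_le_of_lt_of_sub_eq_intCast (hmono j (j + 1) (by omega) (by omega) hj)
        (hint (j + 1) j (by omega) hj (by omega) (by omega))
    push_cast
    linarith [ih (by omega)]

theorem alpha_shifts_in_segments_general (t : ℕ) (a b : ℕ → ℝ)
    (hamono : ∀ i j, 1 ≤ i → i < j → j ≤ t → a i < a j)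
    (hbmono : ∀ i j, 1 ≤ i → i < j → j ≤ t → b i < b j)
    (hint_aa : ∀ i j, 1 ≤ i → i ≤ t → 1 ≤ j → j ≤ t → ∃ n : ℤ, a i - a j = (n : ℝ))
    (hint_bb : ∀ i j, 1 ≤ i → i ≤ t → 1 ≤ j → j ≤ t → ∃ n : ℤ, b i - b j = (n : ℝ))
    (ha1 : (1/2 : ℝ) ≤ a 1)
    (α : ℝ) (k : ℕ) (hk1 : 1 ≤ k) (hkt : k ≤ t)
    (hak : a k ≤ α) (hbk : α ≤ b k) (hαk : ∃ n : ℤ, α - a k = (n : ℝ)) :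
    k ∈ {i : ℕ | 1 ≤ i ∧ α - (k : ℝ) + (i : ℝ) ≤ b i} ∧
    ∀ i, sInf {i : ℕ | 1 ≤ i ∧ α - (k : ℝ) + (i : ℝ) ≤ b i} ≤ i → i ≤ k →
      inSeg (a i) (b i) (α - (k : ℝ) + (i : ℝ)) ∧
      (1/2 : ℝ) ≤ α - (k : ℝ) + (i : ℝ) ∧ (0 : ℝ) < α - (k : ℝ) + (i : ℝ) := by
  set S : Set ℕ := {i : ℕ | 1 ≤ i ∧ α - (k : ℝ) + (i : ℝ) ≤ b i}
  have hkS : k ∈ S := ⟨hk1, by linarith⟩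
  refine ⟨hkS, fun i hmi hik => ?_⟩
  obtain ⟨hm1, hmb⟩ : sInf S ∈ S := Nat.sInf_mem ⟨k, hkS⟩
  have hi1 : 1 ≤ i := hm1.trans hmi
  have hit : i ≤ t := hik.trans hkt
  have hai := sub_natCast_le_sub_natCast hamono hint_aa hi1 hik hkt
  have ha1i := sub_natCast_le_sub_natCast hamono hint_aa le_rfl hi1 hit
  have hbi := sub_natCast_le_sub_natCast hbmono hint_bb hm1 hmi hit
  have hcoset : ∃ q : ℤ, α - k + i - a i = q := by
    obtain ⟨n, hn⟩ := hαk
    obtain ⟨p, hp⟩ := hint_aa k i hk1 hkt hi1 hit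
    exact ⟨n + p + i - k, by push_cast; linarith⟩
  have hi1' : (1 : ℝ) ≤ i := by exact_mod_cast hi1
  push_cast at ha1i
  exact ⟨⟨by linarith, by linarith, hcoset⟩, by linarith, by linarith⟩

/-- the set `{i : α - k + i ≤ b i}` contains `k`, and with `k_m` its least
element, `α - k + i ∈ [a_i, b_i]` and `α - k + i ≥ 1/2 > 0` for all `k_m ≤ i ≤ k`. -/
theorem alpha_shifts_in_segments (t : ℕ) (ht : 0 < t) (a b : ℕ → ℝ)
    (hamono : ∀ i j, 1 ≤ i → i < j → j ≤ t → a i < a j)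
    (hbmono : ∀ i j, 1 ≤ i → i < j → j ≤ t → b i < b j)
    (hab : ∀ i, 1 ≤ i → i ≤ t → a i ≤ b i)
    (hint_aa : ∀ i j, 1 ≤ i → i ≤ t → 1 ≤ j → j ≤ t → ∃ n : ℤ, a i - a j = (n : ℝ))
    (hint_bb : ∀ i j, 1 ≤ i → i ≤ t → 1 ≤ j → j ≤ t → ∃ n : ℤ, b i - b j = (n : ℝ))
    (hint_ab : ∀ i j, 1 ≤ i → i ≤ t → 1 ≤ j → j ≤ t → ∃ n : ℤ, a i - b j = (n : ℝ))
    (ha1 : (1/2 : ℝ) ≤ a 1)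
    (α : ℝ) (k : ℕ) (hk1 : 1 ≤ k) (hkt : k ≤ t)
    (hak : a k ≤ α) (hbk : α ≤ b k) (hαk : ∃ n : ℤ, α - a k = (n : ℝ)) :
    k ∈ {i : ℕ | 1 ≤ i ∧ α - (k : ℝ) + (i : ℝ) ≤ b i} ∧
    ∀ i, sInf {i : ℕ | 1 ≤ i ∧ α - (k : ℝ) + (i : ℝ) ≤ b i} ≤ i → i ≤ k →
      inSeg (a i) (b i) (α - (k : ℝ) + (i : ℝ)) ∧
      (1/2 : ℝ) ≤ α - (k : ℝ) + (i : ℝ) ∧ (0 : ℝ) < α - (k : ℝ) + (i : ℝ) :=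
  alpha_shifts_in_segments_general t a b hamono hbmono hint_aa hint_bb ha1 α k hk1 hkt hak hbk hαk
end

section
/- Fix a positive integer t and real numbers a_1 < … < a_t and b_1 < … < b_t with a_i ≤ b_i for every i, such that all the differences a_i − a_j, b_i − b_j, a_i − b_j are integers; assume a_1 ≥ 1/2. Let α be a real number and k ∈ {1,…,t} an index with a_k ≤ α ≤ b_k and α − a_k ∈ ℤ, and let k_m be the least index i with α − k + i ≤ b_i. Define r_i = b_i for i < k_m and for i > k, and r_i = α − k + i − 1 for k_m ≤ i ≤ k. Then the sequence i ↦ a_i + r_i is strictly increasing on {1,…,t}, one has a_i + r_i ≥ 2a_1 − 1 ≥ 0 for every i, and a_i + r_i > 0 for every i with r_i ≥ a_i. Equivalently, setting e_i = −(a_i + r_i)/2, one has e_t < e_{t−1} < … < e_1, and e_i < 0 whenever r_i ≥ a_i. -/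
/-!
Set `s i = a i + r i`. Since `a` is strictly increasing with integral gaps, `a j - a i ≥ j - i`;
the same integrality turns the minimality of `k_m` into `b i ≤ α - k + i - 1` for `i < k_m`.
Hence `r` is nondecreasing: it follows `b` outside `[k_m, k]`, climbs by one on `[k_m, k]`,
and jumps from `r k = α - 1 < b k` back onto `b`. So `s` is strictly increasing, and
`s i ≥ s 1 ≥ 2 a 1 - 1`, because `r 1` is either `b 1 ≥ a 1` or `α - k ≥ a k - k ≥ a 1 - 1`.
-/

open Set

lemma add_one_le_of_lt_of_sub_eq_intCast_s6 {R : Type*} [Ring R] [LinearOrder R]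
    [IsStrictOrderedRing R] {x y : R} (hxy : x < y) {n : ℤ} (hn : y - x = n) : x + 1 ≤ y := by
  have hn_pos : (0 : R) < n := hn ▸ sub_pos.mpr hxy
  rw [← le_sub_iff_add_le', hn]
  exact_mod_cast (Int.cast_pos.mp hn_pos : 0 < n)

lemma monotoneOn_sub_natCast_of_strictMonoOn {a : ℕ → ℝ} {s : Set ℕ} [s.OrdConnected]
    (ha : StrictMonoOn a s) (hint : ∀ i ∈ s, ∀ j ∈ s, ∃ n : ℤ, a i - a j = n) :
    MonotoneOn (fun i ↦ a i - i) s := by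
  refine monotoneOn_of_le_add_one ‹_› fun n _ hn hn1 ↦ ?_
  obtain ⟨m, hm⟩ := hint (n + 1) hn1 n hn
  have := add_one_le_of_lt_of_sub_eq_intCast_s6 (ha hn hn1 n.lt_succ_self) hm
  push_cast
  linarith

section Splice

variable {k km : ℕ} {α : ℝ} {b r : ℕ → ℝ}

lemma le_sub_one_of_lt_sInf (hkm : km = sInf {i : ℕ | 1 ≤ i ∧ α - (k : ℝ) + (i : ℝ) ≤ b i})
    {i : ℕ} (hi1 : 1 ≤ i) (hikm : i < km) (hαb : ∃ n : ℤ, α - b i = n) :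
    b i ≤ α - k + i - 1 := by
  subst hkm
  have hlt : b i < α - k + i := by
    by_contra! hle
    exact Nat.notMem_of_lt_sInf hikm (show i ∈ {i : ℕ | _} from ⟨hi1, hle⟩)
  obtain ⟨n, hn⟩ := hαb
  have := add_one_le_of_lt_of_sub_eq_intCast_s6 hlt (n := n - k + i) (by push_cast; linarith)
  linarith

lemma monotoneOn_of_splice {t : ℕ} (hb : MonotoneOn b (Icc 1 t)) (hbk : α ≤ b k)
    (hkm_le : km ≤ k) (hbelow : ∀ i, 1 ≤ i → i < km → b i ≤ α - k + i - 1)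
    (hr1 : ∀ i, i < km → r i = b i) (hr2 : ∀ i, k < i → r i = b i)
    (hr3 : ∀ i, km ≤ i → i ≤ k → r i = α - k + i - 1) : MonotoneOn r (Icc 1 t) := by
  refine monotoneOn_of_le_add_one ordConnected_Icc fun n _ hn hn1 ↦ ?_
  have hb_step : b n ≤ b (n + 1) := hb hn hn1 n.le_succ
  rcases lt_or_ge (n + 1) km with hn1_km | hkm_n1
  · rw [hr1 n (by omega), hr1 (n + 1) hn1_km]
    exact hb_step
  rcases lt_or_ge k n with hkn | hnk
  · rw [hr2 n hkn, hr2 (n + 1) (by omega)]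
    exact hb_step
  rcases hnk.eq_or_lt with rfl | hnk
  · rw [hr3 n hkm_le le_rfl, hr2 (n + 1) n.lt_succ_self]
    linarith
  rw [hr3 (n + 1) hkm_n1 hnk]
  rcases lt_or_ge n km with hn_km | hkm_n
  · rw [hr1 n hn_km]
    have := hbelow n hn.1 hn_km
    push_cast
    linarith
  · rw [hr3 n hkm_n hnk.le]
    push_cast
    linarith

end Splice

theorem pi_k_well_defined_general (t : ℕ) (a b : ℕ → ℝ)
    (hamono : ∀ i j, 1 ≤ i → i < j → j ≤ t → a i < a j)
    (hbmono : ∀ i j, 1 ≤ i → i < j → j ≤ t → b i < b j)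
    (hab : ∀ i, 1 ≤ i → i ≤ t → a i ≤ b i)
    (hint_aa : ∀ i j, 1 ≤ i → i ≤ t → 1 ≤ j → j ≤ t → ∃ n : ℤ, a i - a j = (n : ℝ))
    (hint_ab : ∀ i j, 1 ≤ i → i ≤ t → 1 ≤ j → j ≤ t → ∃ n : ℤ, a i - b j = (n : ℝ))
    (ha1 : (1/2 : ℝ) ≤ a 1)
    (α : ℝ) (k : ℕ) (hk1 : 1 ≤ k) (hkt : k ≤ t)
    (hak : a k ≤ α) (hbk : α ≤ b k) (hαk : ∃ n : ℤ, α - a k = (n : ℝ))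
    (km : ℕ) (hkm : km = sInf {i : ℕ | 1 ≤ i ∧ α - (k : ℝ) + (i : ℝ) ≤ b i})
    (r : ℕ → ℝ)
    (hr1 : ∀ i, i < km → r i = b i)
    (hr2 : ∀ i, k < i → r i = b i)
    (hr3 : ∀ i, km ≤ i → i ≤ k → r i = α - (k : ℝ) + (i : ℝ) - 1) :
    (∀ i j, 1 ≤ i → i < j → j ≤ t → a i + r i < a j + r j) ∧
    (∀ i, 1 ≤ i → i ≤ t → 2 * a 1 - 1 ≤ a i + r i) ∧
    ((0 : ℝ) ≤ 2 * a 1 - 1) ∧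
    (∀ i, 1 ≤ i → i ≤ t → a i ≤ r i → 0 < a i + r i) ∧
    (∀ i j, 1 ≤ i → i < j → j ≤ t → -(a j + r j) / 2 < -(a i + r i) / 2) ∧
    (∀ i, 1 ≤ i → i ≤ t → a i ≤ r i → -(a i + r i) / 2 < 0) := by
  
  have h1t : 1 ∈ Icc 1 t := ⟨le_rfl, hk1.trans hkt⟩
  have ha : StrictMonoOn a (Icc 1 t) := fun i hi j hj hij ↦ hamono i j hi.1 hij hj.2
  have hb : StrictMonoOn b (Icc 1 t) := fun i hi j hj hij ↦ hbmono i j hi.1 hij hj.2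
  have hαb : ∀ i, 1 ≤ i → i ≤ t → ∃ n : ℤ, α - b i = n := fun i hi1 hit ↦ by
    obtain ⟨n, hn⟩ := hαk
    obtain ⟨m, hm⟩ := hint_ab k i hk1 hkt hi1 hit
    exact ⟨n + m, by push_cast; linarith⟩
  have hkm_le : km ≤ k := hkm ▸ Nat.sInf_le ⟨hk1, by linarith⟩
  have hr : MonotoneOn r (Icc 1 t) := monotoneOn_of_splice hb.monotoneOn hbk hkm_le
    (fun i hi1 hikm ↦ le_sub_one_of_lt_sInf hkm hi1 hikm (hαb i hi1 (by omega))) hr1 hr2 hr3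
  have hs : StrictMonoOn (fun i ↦ a i + r i) (Icc 1 t) := ha.add_monotone hr
  have ha_gap : a 1 - 1 ≤ a k - k := by
    simpa using monotoneOn_sub_natCast_of_strictMonoOn ha
      (fun i hi j hj ↦ hint_aa i j hi.1 hi.2 hj.1 hj.2) h1t ⟨hk1, hkt⟩ hk1
  have hs1 : 2 * a 1 - 1 ≤ a 1 + r 1 := by
    rcases lt_or_ge 1 km with h | h
    · linarith [hr1 1 h, hab 1 le_rfl h1t.2]
    · rw [hr3 1 h hk1]
      push_cast
      linarith
  have hlow : ∀ i, 1 ≤ i → i ≤ t → 2 * a 1 - 1 ≤ a i + r i := fun i hi1 hit ↦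
    hs1.trans (hs.monotoneOn h1t ⟨hi1, hit⟩ hi1)
  have hpos : ∀ i, 1 ≤ i → i ≤ t → a i ≤ r i → 0 < a i + r i := fun i hi1 hit hari ↦ by
    linarith [ha.monotoneOn h1t ⟨hi1, hit⟩ hi1]
  have hlt : ∀ i j, 1 ≤ i → i < j → j ≤ t → a i + r i < a j + r j := fun i j hi hij hj ↦
    hs ⟨hi, by omega⟩ ⟨by omega, hj⟩ hij
  refine ⟨hlt, hlow, by linarith, hpos, fun i j hi hij hj ↦ ?_, fun i hi hit hari ↦ ?_⟩
  · linarith [hlt i j hi hij hj]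
  · linarith [hpos i hi hit hari]

/-- with `r i = b i` for `i < k_m` or `i > k` and `r i = α - k + i - 1` for
`k_m ≤ i ≤ k`, the sequence `a i + r i` is strictly increasing, bounded below by
`2 a_1 - 1 ≥ 0`, and positive whenever `r i ≥ a i`; equivalently the exponents
`e i = -(a i + r i)/2` are strictly decreasing in `i` and negative whenever `r i ≥ a i`. -/
theorem pi_k_well_defined (t : ℕ) (ht : 0 < t) (a b : ℕ → ℝ)
    (hamono : ∀ i j, 1 ≤ i → i < j → j ≤ t → a i < a j)
    (hbmono : ∀ i j, 1 ≤ i → i < j → j ≤ t → b i < b j)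
    (hab : ∀ i, 1 ≤ i → i ≤ t → a i ≤ b i)
    (hint_aa : ∀ i j, 1 ≤ i → i ≤ t → 1 ≤ j → j ≤ t → ∃ n : ℤ, a i - a j = (n : ℝ))
    (hint_bb : ∀ i j, 1 ≤ i → i ≤ t → 1 ≤ j → j ≤ t → ∃ n : ℤ, b i - b j = (n : ℝ))
    (hint_ab : ∀ i j, 1 ≤ i → i ≤ t → 1 ≤ j → j ≤ t → ∃ n : ℤ, a i - b j = (n : ℝ))
    (ha1 : (1/2 : ℝ) ≤ a 1)
    (α : ℝ) (k : ℕ) (hk1 : 1 ≤ k) (hkt : k ≤ t)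
    (hak : a k ≤ α) (hbk : α ≤ b k) (hαk : ∃ n : ℤ, α - a k = (n : ℝ))
    (km : ℕ) (hkm : km = sInf {i : ℕ | 1 ≤ i ∧ α - (k : ℝ) + (i : ℝ) ≤ b i})
    (r : ℕ → ℝ)
    (hr1 : ∀ i, i < km → r i = b i)
    (hr2 : ∀ i, k < i → r i = b i)
    (hr3 : ∀ i, km ≤ i → i ≤ k → r i = α - (k : ℝ) + (i : ℝ) - 1) :
    (∀ i j, 1 ≤ i → i < j → j ≤ t → a i + r i < a j + r j) ∧
    (∀ i, 1 ≤ i → i ≤ t → 2 * a 1 - 1 ≤ a i + r i) ∧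
    ((0 : ℝ) ≤ 2 * a 1 - 1) ∧
    (∀ i, 1 ≤ i → i ≤ t → a i ≤ r i → 0 < a i + r i) ∧
    (∀ i j, 1 ≤ i → i < j → j ≤ t → -(a j + r j) / 2 < -(a i + r i) / 2) ∧
    (∀ i, 1 ≤ i → i ≤ t → a i ≤ r i → -(a i + r i) / 2 < 0) :=
  pi_k_well_defined_general t a b hamono hbmono hab hint_aa hint_ab ha1 α k hk1 hkt hak hbk hαk km
    hkm r hr1 hr2 hr3
end
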